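/- No OWA mechanism with n ≥ 3 simultaneously satisfies NOM and IFS: if an OWA is not obviously manipulable (i.e., w_j = 1 for some j, or w_1 = w_n = 0), then it cannot satisfy both w_1 ≥ 1/n and w_n ≥ 1/n. -/

import Mathlib

/-! If some weight equals 1, the remaining nonnegative weights sum to 0, so only one weight is
positive; but IFS makes both end weights `w₁` and `wₙ` positive, and they are distinct for
`n ≥ 2`. If instead `w₁ = wₙ = 0`, IFS fails outright since `1/n > 0`. -/

theorem eq_of_pos_of_sum_eq_apply {ι : Type*} [Fintype ι] {w : ι → ℝ} (hw : ∀ j, 0 ≤ w j)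
    {k : ι} (hk : ∑ j, w j = w k) {m : ι} (hm : 0 < w m) : m = k := by
  classical
  by_contra hmk
  have hrest : ∑ j ∈ Finset.univ.erase k, w j = 0 := by
    linarith [Finset.add_sum_erase Finset.univ w (Finset.mem_univ k)]
  have hm0 : w m = 0 :=
    (Finset.sum_eq_zero_iff_of_nonneg fun j _ => hw j).mp hrest m (by simp [hmk])
  linarith

theorem owa_NOM_incompatible_with_IFS {n : ℕ} (hn : 3 ≤ n)
    (w : Fin n → ℝ) (hw : ∀ j, w j ∈ Set.Icc (0:ℝ) 1) (hsum : ∑ j, w j = 1)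
    (hnom : (∃ j, w j = 1) ∨ (w ⟨0, by omega⟩ = 0 ∧ w ⟨n - 1, by omega⟩ = 0)) :
    ¬ (1 / (n:ℝ) ≤ w ⟨0, by omega⟩ ∧ 1 / (n:ℝ) ≤ w ⟨n - 1, by omega⟩) := by
  rintro ⟨hfirst, hlast⟩
  have hpos : 0 < 1 / (n:ℝ) := by positivity
  rcases hnom with ⟨j, hj⟩ | ⟨hfirst0, -⟩
  · have hsum_j : ∑ i, w i = w j := hsum.trans hj.symm
    have hnonneg : ∀ i, 0 ≤ w i := fun i => (hw i).1
    have hends : (⟨0, by omega⟩ : Fin n) = ⟨n - 1, by omega⟩ :=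
      (eq_of_pos_of_sum_eq_apply hnonneg hsum_j (hpos.trans_le hfirst)).trans
        (eq_of_pos_of_sum_eq_apply hnonneg hsum_j (hpos.trans_le hlast)).symm
    simp only [Fin.mk.injEq] at hends
    omega
  · linarith
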